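/- arXiv:2304.04104 — 6 statements merged into one kernel-verified Lean document; each statement's English description precedes it below -/
import Mathlib

section
/- Let d ≥ 4 and 0 < γ < √2 − 1. With α = 3/(2(d−1)(1+γ)^4) + 1/2 and β = 1/((d−1)(1+γ)^4), the function φ(ρ) = (1+γ)/√(ρ² + b), where b = 2γ(2+γ)((d−1)(1+γ)² − 3)/(1+γ)², is a solution on (0,∞) of the ODE φ'' + ((d+1)/ρ − ρ/2) φ' − φ/2 + (d−1)(2αφ³ − 3βρ²φ⁵) = 0. -/
/-!
The profile `φ = c / √(ρ² + b)`, `c = 1 + γ`, satisfies the first-order equation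
`φ' = -ρ φ³ / c²`, hence `φ'' = -φ³ / c² + 3 ρ² φ⁵ / c⁴`. Substituting into the shrinker equation,
the `φ⁵` terms cancel against the `β` term, and after `φ² (ρ² + b) = c²` removes the remaining
dependence on `ρ`, the equation reduces to the defining relation of `b`.
-/

open Real

theorem hasDerivAt_div_sqrt_sq_add {b c x : ℝ} (hx : 0 < x ^ 2 + b) :
    HasDerivAt (fun y => c / √(y ^ 2 + b)) (-(c ^ 2)⁻¹ * x * (c / √(x ^ 2 + b)) ^ 3) x := by
  have hsqrt := ((hasDerivAt_pow 2 x).add_const b).sqrt hx.ne'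
  refine ((hasDerivAt_const x c).fun_div hsqrt (sqrt_pos.2 hx).ne').congr_deriv ?_
  field_simp
  push_cast
  ring

theorem hasDerivAt_deriv_of_hasDerivAt_mul_pow_three {f : ℝ → ℝ} {k : ℝ}
    (hf : ∀ x, HasDerivAt f (k * x * f x ^ 3) x) (x : ℝ) :
    HasDerivAt (deriv f) (k * f x ^ 3 + 3 * k ^ 2 * x ^ 2 * f x ^ 5) x := by
  rw [funext fun y => (hf y).deriv]
  refine (((hasDerivAt_id x).const_mul k).mul ((hf x).pow 3)).congr_deriv ?_
  simp only [Pi.pow_apply, id]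
  push_cast
  ring

theorem shrinker_residual_eq_zero {n γ α β b k ρ u : ℝ} (hn : n ≠ 1) (hγ : 1 + γ ≠ 0)
    (hρ : ρ ≠ 0) (hα : α = 3 / (2 * (n - 1) * (1 + γ) ^ 4) + 1 / 2)
    (hβ : β = 1 / ((n - 1) * (1 + γ) ^ 4))
    (hb : b = 2 * γ * (2 + γ) * ((n - 1) * (1 + γ) ^ 2 - 3) / (1 + γ) ^ 2)
    (hk : k = -((1 + γ) ^ 2)⁻¹) (hu : u ^ 2 * (ρ ^ 2 + b) = (1 + γ) ^ 2) :
    (k * u ^ 3 + 3 * k ^ 2 * ρ ^ 2 * u ^ 5) + ((n + 1) / ρ - ρ / 2) * (k * ρ * u ^ 3) - u / 2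
      + (n - 1) * (2 * α * u ^ 3 - 3 * β * ρ ^ 2 * u ^ 5) = 0 := by
  have hn' : n - 1 ≠ 0 := sub_ne_zero.2 hn
  subst hα hβ hb hk
  field_simp
  field_simp at hu
  linear_combination u * hu

theorem shrinker_profile_solves_ODE_general
    (d : ℕ) (hd : 4 ≤ d) (γ : ℝ) (hγ0 : 0 < γ)
    (α β b : ℝ)
    (hα : α = 3 / (2 * ((d : ℝ) - 1) * (1 + γ) ^ 4) + 1 / 2)
    (hβ : β = 1 / (((d : ℝ) - 1) * (1 + γ) ^ 4))
    (hb : b = 2 * γ * (2 + γ) * (((d : ℝ) - 1) * (1 + γ) ^ 2 - 3) / (1 + γ) ^ 2)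
    (φ : ℝ → ℝ) (hφ : ∀ ρ, φ ρ = (1 + γ) / Real.sqrt (ρ ^ 2 + b)) :
    ∀ ρ ∈ Set.Ioi (0 : ℝ),
      deriv (deriv φ) ρ + (((d : ℝ) + 1) / ρ - ρ / 2) * deriv φ ρ - φ ρ / 2
        + ((d : ℝ) - 1) * (2 * α * (φ ρ) ^ 3 - 3 * β * ρ ^ 2 * (φ ρ) ^ 5) = 0 := by
  intro ρ hρ
  have hd' : (4 : ℝ) ≤ d := by exact_mod_cast hd
  have hb0 : 0 < b := by
    have : 0 < ((d : ℝ) - 1) * (1 + γ) ^ 2 - 3 := by nlinarith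
    rw [hb]
    exact div_pos (mul_pos (by positivity) this) (by positivity)
  obtain rfl : φ = fun y => (1 + γ) / √(y ^ 2 + b) := funext hφ
  have hφ' (x : ℝ) := hasDerivAt_div_sqrt_sq_add (c := 1 + γ) (show 0 < x ^ 2 + b by positivity)
  rw [(hasDerivAt_deriv_of_hasDerivAt_mul_pow_three hφ' ρ).deriv, (hφ' ρ).deriv]
  refine shrinker_residual_eq_zero (by linarith) (by positivity) (ne_of_gt hρ) hα hβ hb rfl ?_
  rw [div_pow, sq_sqrt (by positivity)]
  field_simp

/-- The explicit profile φ(ρ) = (1+γ)/√(ρ²+b) solves the corotational shrinker ODE. -/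
theorem shrinker_profile_solves_ODE
    (d : ℕ) (hd : 4 ≤ d) (γ : ℝ) (hγ0 : 0 < γ) (hγ1 : γ < Real.sqrt 2 - 1)
    (α β b : ℝ)
    (hα : α = 3 / (2 * ((d : ℝ) - 1) * (1 + γ) ^ 4) + 1 / 2)
    (hβ : β = 1 / (((d : ℝ) - 1) * (1 + γ) ^ 4))
    (hb : b = 2 * γ * (2 + γ) * (((d : ℝ) - 1) * (1 + γ) ^ 2 - 3) / (1 + γ) ^ 2)
    (φ : ℝ → ℝ) (hφ : ∀ ρ, φ ρ = (1 + γ) / Real.sqrt (ρ ^ 2 + b)) :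
    ∀ ρ ∈ Set.Ioi (0 : ℝ),
      deriv (deriv φ) ρ + (((d : ℝ) + 1) / ρ - ρ / 2) * deriv φ ρ - φ ρ / 2
        + ((d : ℝ) - 1) * (2 * α * (φ ρ) ^ 3 - 3 * β * ρ ^ 2 * (φ ρ) ^ 5) = 0 :=
  shrinker_profile_solves_ODE_general d hd γ hγ0 α β b hα hβ hb φ hφ
end

section
/- Let d ≥ 4, 0 < γ < √2 − 1, and set α = 3/(2(d−1)(1+γ)^4) + 1/2, β = 1/((d−1)(1+γ)^4). Then the function g(u) = u√(1 − αu² + βu⁴) satisfies g(u) > 0 for all u ∈ (0, 1+γ]. -/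
/-- The warping function g(u) = u√(1 − αu² + βu⁴) is positive on (0, 1+γ], and in
particular the radicand is positive there. -/
theorem warping_function_positive
    (d : ℕ) (hd : 4 ≤ d) (γ : ℝ) (hγ0 : 0 < γ) (hγ1 : γ < Real.sqrt 2 - 1)
    (α β : ℝ)
    (hα : α = 3 / (2 * ((d : ℝ) - 1) * (1 + γ) ^ 4) + 1 / 2)
    (hβ : β = 1 / (((d : ℝ) - 1) * (1 + γ) ^ 4))
    (g : ℝ → ℝ) (hg : ∀ u, g u = u * Real.sqrt (1 - α * u ^ 2 + β * u ^ 4)) :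
    ∀ u ∈ Set.Ioc (0 : ℝ) (1 + γ), 0 < 1 - α * u ^ 2 + β * u ^ 4 ∧ 0 < g u := by
  intro u hu
  obtain ⟨hu0, hu1⟩ := hu
  have hd3 : (3 : ℝ) ≤ (d : ℝ) - 1 := by
    have : (4 : ℝ) ≤ (d : ℝ) := by exact_mod_cast hd
    linarith
  have hr1 : (1 : ℝ) ≤ 1 + γ := by linarith
  have hr4 : (1 : ℝ) ≤ (1 + γ) ^ 4 := one_le_pow₀ hr1
  have hc3 : (3 : ℝ) ≤ ((d : ℝ) - 1) * (1 + γ) ^ 4 := by nlinarith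
  have hc0 : (0 : ℝ) < ((d : ℝ) - 1) * (1 + γ) ^ 4 := by linarith
  -- u² < 2
  have hs2 : Real.sqrt 2 ^ 2 = 2 := Real.sq_sqrt (by norm_num)
  have hu2 : u ^ 2 < 2 := by
    have h1 : u < Real.sqrt 2 := by linarith
    have h2 : 0 ≤ u := le_of_lt hu0
    nlinarith [Real.sqrt_nonneg 2]
  set c : ℝ := ((d : ℝ) - 1) * (1 + γ) ^ 4 with hc
  have hrad : 0 < 1 - α * u ^ 2 + β * u ^ 4 := by
    rw [hα, hβ]
    have key : 0 < c - (3 / 2 + c / 2) * u ^ 2 + u ^ 4 := by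
      nlinarith [sq_nonneg (u ^ 2 - 3 / 2), mul_nonneg (by linarith : (0:ℝ) ≤ c - 3)
        (by linarith : (0:ℝ) ≤ 2 - u ^ 2)]
    have heq : 1 - (3 / (2 * ((d : ℝ) - 1) * (1 + γ) ^ 4) + 1 / 2) * u ^ 2
        + 1 / (((d : ℝ) - 1) * (1 + γ) ^ 4) * u ^ 4
        = (c - (3 / 2 + c / 2) * u ^ 2 + u ^ 4) / c := by
      rw [hc]; field_simp
    rw [heq]
    exact div_pos key hc0
  refine ⟨hrad, ?_⟩
  rw [hg]
  exact mul_pos hu0 (Real.sqrt_pos.mpr hrad)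
end

section
/- Let d ≥ 4, 0 < γ < √2 − 1, α = 3/(2(d−1)(1+γ)^4) + 1/2, β = 1/((d−1)(1+γ)^4), and g(u) = u√(1 − αu² + βu⁴). Then the least positive critical point of g is u = 1, i.e. g'(1) = 0 and g'(u) > 0 for all u ∈ (0,1). -/
/-!
Since `α = (3β + 1) / 2`, the numerator of `g'(u)` factors as `(1 - u²)(1 - 3βu²)`,
and `3β < 1` because `(d - 1)(1 + γ)⁴ > 3`. So on `(0, 1]` the first factor vanishes only
at `u = 1` and the second stays positive; `α < 1` keeps the radicand positive there.
-/

open Real Set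

section Quartic

variable (α β : ℝ)

theorem hasDerivAt_mul_sqrt_quartic {u : ℝ} (hu : 0 < 1 - α * u ^ 2 + β * u ^ 4) :
    HasDerivAt (fun u => u * √(1 - α * u ^ 2 + β * u ^ 4))
      ((1 - 2 * α * u ^ 2 + 3 * β * u ^ 4) / √(1 - α * u ^ 2 + β * u ^ 4)) u := by
  have hq : HasDerivAt (fun u : ℝ => 1 - α * u ^ 2 + β * u ^ 4)
      (-(α * (2 * u)) + β * (4 * u ^ 3)) u := by
    simpa using (((hasDerivAt_pow 2 u).const_mul α).const_sub 1).fun_add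
      ((hasDerivAt_pow 4 u).const_mul β)
  refine ((hasDerivAt_id' u).fun_mul (hq.sqrt hu.ne')).congr_deriv ?_
  have hsq : √(1 - α * u ^ 2 + β * u ^ 4) ^ 2 = 1 - α * u ^ 2 + β * u ^ 4 := sq_sqrt hu.le
  have hne : √(1 - α * u ^ 2 + β * u ^ 4) ≠ 0 := (sqrt_pos.2 hu).ne'
  generalize √(1 - α * u ^ 2 + β * u ^ 4) = s at hsq hne ⊢
  field_simp
  linear_combination 2 * hsq

theorem quartic_pos_of_sq_le_one (hα : α < 1) (hβ : 0 ≤ β) {u : ℝ} (hu : u ^ 2 ≤ 1) :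
    0 < 1 - α * u ^ 2 + β * u ^ 4 := by
  have hu2 : 0 ≤ u ^ 2 := sq_nonneg u
  have hu4 : u ^ 4 = (u ^ 2) ^ 2 := by ring
  rw [hu4]
  rcases le_or_gt α 0 with hα0 | hα0 <;> nlinarith [mul_nonneg hβ (sq_nonneg (u ^ 2))]

theorem quartic_deriv_numerator_eq (hα : α = 3 / 2 * β + 1 / 2) (u : ℝ) :
    1 - 2 * α * u ^ 2 + 3 * β * u ^ 4 = (1 - u ^ 2) * (1 - 3 * β * u ^ 2) := by
  rw [hα]; ring

end Quartic

theorem three_lt_warping_scale {d : ℕ} (hd : 4 ≤ d) {γ : ℝ} (hγ : 0 < γ) :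
    3 < ((d : ℝ) - 1) * (1 + γ) ^ 4 := by
  have hd' : (3 : ℝ) ≤ (d : ℝ) - 1 := by
    have : (4 : ℝ) ≤ d := by exact_mod_cast hd
    linarith
  have hγ4 : 1 < (1 + γ) ^ 4 := one_lt_pow₀ (by linarith) (by norm_num)
  nlinarith

theorem least_critical_point_of_warping_general
    (d : ℕ) (hd : 4 ≤ d) (γ : ℝ) (hγ0 : 0 < γ)
    (α β : ℝ)
    (hα : α = 3 / (2 * ((d : ℝ) - 1) * (1 + γ) ^ 4) + 1 / 2)
    (hβ : β = 1 / (((d : ℝ) - 1) * (1 + γ) ^ 4))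
    (g : ℝ → ℝ) (hg : ∀ u, g u = u * Real.sqrt (1 - α * u ^ 2 + β * u ^ 4)) :
    deriv g 1 = 0 ∧ ∀ u ∈ Set.Ioo (0 : ℝ) 1, 0 < deriv g u := by
  have hscale := three_lt_warping_scale hd hγ0
  have hβ0 : 0 < β := by rw [hβ]; positivity
  have hβ3 : 3 * β < 1 := by rw [hβ, mul_one_div, div_lt_one (by linarith)]; exact hscale
  have hαβ : α = 3 / 2 * β + 1 / 2 := by rw [hα, hβ, mul_assoc 2, div_mul_eq_div_mul_one_div]
  have hderiv : ∀ u : ℝ, u ^ 2 ≤ 1 →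
      deriv g u = (1 - u ^ 2) * (1 - 3 * β * u ^ 2) / √(1 - α * u ^ 2 + β * u ^ 4) := by
    intro u hu
    have hpos := quartic_pos_of_sq_le_one α β (by linarith) hβ0.le hu
    rw [funext hg, (hasDerivAt_mul_sqrt_quartic α β hpos).deriv,
      quartic_deriv_numerator_eq α β hαβ]
  refine ⟨by simp [hderiv 1 (by norm_num)], fun u ⟨hu0, hu1⟩ => ?_⟩
  have hu2 : u ^ 2 < 1 := by nlinarith
  rw [hderiv u hu2.le]
  have hpos := quartic_pos_of_sq_le_one α β (by linarith) hβ0.le hu2.le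
  exact div_pos (mul_pos (by linarith) (by nlinarith)) (sqrt_pos.2 hpos)

/-- The least positive critical point of g(u) = u√(1 − αu² + βu⁴) is u = 1:
g'(1) = 0 and g'(u) > 0 on (0,1). -/
theorem least_critical_point_of_warping
    (d : ℕ) (hd : 4 ≤ d) (γ : ℝ) (hγ0 : 0 < γ) (hγ1 : γ < Real.sqrt 2 - 1)
    (α β : ℝ)
    (hα : α = 3 / (2 * ((d : ℝ) - 1) * (1 + γ) ^ 4) + 1 / 2)
    (hβ : β = 1 / (((d : ℝ) - 1) * (1 + γ) ^ 4))
    (g : ℝ → ℝ) (hg : ∀ u, g u = u * Real.sqrt (1 - α * u ^ 2 + β * u ^ 4)) :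
    deriv g 1 = 0 ∧ ∀ u ∈ Set.Ioo (0 : ℝ) 1, 0 < deriv g u :=
  least_critical_point_of_warping_general d hd γ hγ0 α β hα hβ g hg
end

section
/- Let θ : [0,∞) → ℝ be C¹, let f : ℝ → ℝ be continuous with f(u) > 0 for u > 0, let d ≥ 2, and suppose ρ ↦ ρ^{d−1} e^{−ρ²/4} θ'(ρ) is differentiable on (0,∞) with derivative (d−1)ρ^{d−3} e^{−ρ²/4} f(θ(ρ)). If θ(ρ₀) > 0 and θ'(ρ₀) > 0 at some ρ₀ > 0, and θ(ρ) > 0 for all ρ ≥ ρ₀, then there is a constant C > 0 such that θ'(ρ) ≥ C ρ^{1−d} e^{ρ²/4} for all ρ ≥ ρ₀; consequently θ(ρ) → ∞ as ρ → ∞. -/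
/-!
Along a solution, the weighted derivative `ρ^{d-1} e^{-ρ²/4} θ'(ρ)` has derivative
`(d-1) ρ^{d-3} e^{-ρ²/4} f(θ(ρ))`, which is positive as long as `θ > 0`. So the weighted derivative
is increasing on `[ρ₀, ∞)` and stays above its positive value `C` at `ρ₀`, i.e.
`θ'(ρ) ≥ C ρ^{1-d} e^{ρ²/4}`. This lower bound tends to infinity, so eventually `θ' ≥ 1` and `θ`
grows at least linearly.
-/

open Set Filter Real

theorem monotoneOn_Ici_of_hasDerivAt_of_nonneg {g g' : ℝ → ℝ} {a : ℝ}
    (hg : ∀ x ∈ Ici a, HasDerivAt g (g' x) x) (hg' : ∀ x ∈ Ioi a, 0 ≤ g' x) :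
    MonotoneOn g (Ici a) := by
  refine monotoneOn_of_hasDerivWithinAt_nonneg (f' := g') (convex_Ici a)
    (fun x hx => (hg x hx).continuousAt.continuousWithinAt) ?_ ?_ <;> rw [interior_Ici]
  · exact fun x hx => (hg x (mem_Ici_of_Ioi hx)).hasDerivWithinAt
  · exact hg'

theorem div_le_of_monotoneOn_mul {w u : ℝ → ℝ} {a x : ℝ}
    (hmono : MonotoneOn (fun x => w x * u x) (Ici a)) (hx : a ≤ x) (hw : 0 < w x) :
    w a * u a / w x ≤ u x := by
  rw [div_le_iff₀ hw, mul_comm (u x)]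
  exact hmono self_mem_Ici hx hx

theorem rpow_mul_exp_eq_inv {ρ : ℝ} (hρ : 0 < ρ) (s : ℝ) :
    ρ ^ (1 - s) * exp (ρ ^ 2 / 4) = (ρ ^ (s - 1) * exp (-ρ ^ 2 / 4))⁻¹ := by
  rw [mul_inv, ← rpow_neg hρ.le, ← exp_neg, neg_sub, neg_div, neg_neg]

theorem tendsto_rpow_mul_exp_sq_div_four_atTop (s : ℝ) :
    Tendsto (fun ρ => ρ ^ s * exp (ρ ^ 2 / 4)) atTop atTop := by
  refine tendsto_atTop_mono' _ ?_ (tendsto_exp_div_rpow_atTop (-s))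
  filter_upwards [eventually_ge_atTop 4] with ρ hρ
  rw [rpow_neg (by linarith), div_inv_eq_mul, mul_comm]
  gcongr
  nlinarith

theorem tendsto_atTop_of_forall_le_deriv {θ : ℝ → ℝ} {R c : ℝ} (hc : 0 < c)
    (h : ∀ x ≥ R, c ≤ deriv θ x) : Tendsto θ atTop atTop := by
  -- `deriv θ x = 0` wherever `θ` is not differentiable, so the lower bound forces differentiability
  have hdiff : ∀ x ≥ R, DifferentiableAt ℝ θ x := fun x hx =>
    differentiableAt_of_deriv_ne_zero (hc.trans_le (h x hx)).ne'
  have hlin : ∀ y ≥ R, c * (y - R) + θ R ≤ θ y := fun y hy => by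
    have := (convex_Ici R).mul_sub_le_image_sub_of_le_deriv
      (fun x hx => (hdiff x hx).continuousAt.continuousWithinAt)
      (fun x hx => (hdiff x (interior_subset hx)).differentiableWithinAt)
      (fun x hx => h x (interior_subset hx)) R self_mem_Ici y hy hy
    linarith
  refine tendsto_atTop_mono' _ ((eventually_ge_atTop R).mono hlin) ?_
  exact tendsto_atTop_add_const_right _ _
    ((tendsto_id.atTop_add tendsto_const_nhds).const_mul_atTop hc)

theorem weighted_derivative_growth_general
    (d : ℕ) (hd : 2 ≤ d)
    (θ : ℝ → ℝ)
    (f : ℝ → ℝ) (hf_pos : ∀ u > (0 : ℝ), 0 < f u)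
    (hODE : ∀ ρ ∈ Set.Ioi (0 : ℝ),
      HasDerivAt (fun ρ : ℝ => ρ ^ ((d : ℝ) - 1) * Real.exp (-ρ ^ 2 / 4) * deriv θ ρ)
        (((d : ℝ) - 1) * ρ ^ ((d : ℝ) - 3) * Real.exp (-ρ ^ 2 / 4) * f (θ ρ)) ρ)
    (ρ₀ : ℝ) (hρ₀ : 0 < ρ₀) (hθ'ρ₀ : 0 < deriv θ ρ₀)
    (hθpos : ∀ ρ ≥ ρ₀, 0 < θ ρ) :
    (∃ C > (0 : ℝ), ∀ ρ ≥ ρ₀,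
        C * ρ ^ ((1 : ℝ) - (d : ℝ)) * Real.exp (ρ ^ 2 / 4) ≤ deriv θ ρ) ∧
      Filter.Tendsto θ Filter.atTop Filter.atTop := by
  have hd1 : (0 : ℝ) < d - 1 := by
    have : (2 : ℝ) ≤ d := by exact_mod_cast hd
    linarith
  have hmono : MonotoneOn (fun ρ => ρ ^ ((d : ℝ) - 1) * exp (-ρ ^ 2 / 4) * deriv θ ρ) (Ici ρ₀) :=
    monotoneOn_Ici_of_hasDerivAt_of_nonneg (fun x hx => hODE x (hρ₀.trans_le hx)) fun x hx => by
      have := hf_pos _ (hθpos x (le_of_lt hx))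
      have := rpow_pos_of_pos (hρ₀.trans hx) ((d : ℝ) - 3)
      positivity
  set C := ρ₀ ^ ((d : ℝ) - 1) * exp (-ρ₀ ^ 2 / 4) * deriv θ ρ₀
  have hC : 0 < C := by
    have := rpow_pos_of_pos hρ₀ ((d : ℝ) - 1)
    positivity
  have hbound : ∀ ρ ≥ ρ₀, C * ρ ^ ((1 : ℝ) - (d : ℝ)) * exp (ρ ^ 2 / 4) ≤ deriv θ ρ := by
    intro ρ hρ
    have hρpos := hρ₀.trans_le hρ
    have := rpow_pos_of_pos hρpos ((d : ℝ) - 1)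
    rw [mul_assoc, rpow_mul_exp_eq_inv hρpos, ← div_eq_mul_inv]
    exact div_le_of_monotoneOn_mul (w := fun ρ => ρ ^ ((d : ℝ) - 1) * exp (-ρ ^ 2 / 4)) hmono hρ
      (by positivity)
  refine ⟨⟨C, hC, hbound⟩, ?_⟩
  obtain ⟨R, hR⟩ := eventually_atTop.1
    (((tendsto_rpow_mul_exp_sq_div_four_atTop (1 - d)).const_mul_atTop hC).eventually_ge_atTop 1)
  refine tendsto_atTop_of_forall_le_deriv (R := max R ρ₀) one_pos fun ρ hρ => ?_
  simp only [← mul_assoc] at hR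
  exact (hR ρ (le_of_max_le_left hρ)).trans (hbound ρ (le_of_max_le_right hρ))

/-- Growth of θ from the monotonicity of the weighted derivative ρ^{d−1}e^{−ρ²/4}θ'. -/
theorem weighted_derivative_growth
    (d : ℕ) (hd : 2 ≤ d)
    (θ : ℝ → ℝ) (hθ : ContDiff ℝ 1 θ)
    (f : ℝ → ℝ) (hf_cont : Continuous f) (hf_pos : ∀ u > (0 : ℝ), 0 < f u)
    (hODE : ∀ ρ ∈ Set.Ioi (0 : ℝ),
      HasDerivAt (fun ρ : ℝ => ρ ^ ((d : ℝ) - 1) * Real.exp (-ρ ^ 2 / 4) * deriv θ ρ)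
        (((d : ℝ) - 1) * ρ ^ ((d : ℝ) - 3) * Real.exp (-ρ ^ 2 / 4) * f (θ ρ)) ρ)
    (ρ₀ : ℝ) (hρ₀ : 0 < ρ₀) (hθρ₀ : 0 < θ ρ₀) (hθ'ρ₀ : 0 < deriv θ ρ₀)
    (hθpos : ∀ ρ ≥ ρ₀, 0 < θ ρ) :
    (∃ C > (0 : ℝ), ∀ ρ ≥ ρ₀,
        C * ρ ^ ((1 : ℝ) - (d : ℝ)) * Real.exp (ρ ^ 2 / 4) ≤ deriv θ ρ) ∧
      Filter.Tendsto θ Filter.atTop Filter.atTop :=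
  weighted_derivative_growth_general d hd θ f hf_pos hODE ρ₀ hρ₀ hθ'ρ₀ hθpos
end

section
/- Let n ≥ 1, τ > 0, and κ(τ) = 1 − e^{−τ}. Define the operator S₀(τ) on Schwartz functions by [S₀(τ)f](x) = e^{−τ/2}(H_{κ(τ)} ∗ f)(e^{−τ/2}x), where H_t(x) = (4πt)^{−n/2} e^{−|x|²/(4t)}. Then for every s ≥ 0 and every Schwartz function f, ‖S₀(τ)f‖_{Ḣ^s(ℝⁿ)} ≤ e^{(1/2)(n/2 − 1 − s)τ} ‖f‖_{Ḣ^s(ℝⁿ)}. -/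
open MeasureTheory

noncomputable section

/-- The heat kernel H_t(x) = (4πt)^{−n/2} e^{−|x|²/(4t)}. -/
def heatK (n : ℕ) (t : ℝ) (x : EuclideanSpace ℝ (Fin n)) : ℝ :=
  (4 * Real.pi * t) ^ (-(n : ℝ) / 2) * Real.exp (-‖x‖ ^ 2 / (4 * t))

/-- The free semigroup [S₀(τ)f](x) = e^{−τ/2}(H_{κ(τ)} ∗ f)(e^{−τ/2}x), κ(τ) = 1 − e^{−τ}. -/
def S0 (n : ℕ) (τ : ℝ) (f : EuclideanSpace ℝ (Fin n) → ℂ)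
    (x : EuclideanSpace ℝ (Fin n)) : ℂ :=
  Real.exp (-τ / 2) * ∫ y : EuclideanSpace ℝ (Fin n),
    ((heatK n (1 - Real.exp (-τ)) (Real.exp (-τ / 2) • x - y) : ℝ) : ℂ) * f y

/-- Ḣ^s norm. -/
def hnorm (n : ℕ) (s : ℝ) (f : EuclideanSpace ℝ (Fin n) → ℂ) : ℝ :=
  (∫ ξ : EuclideanSpace ℝ (Fin n),
    ‖ξ‖ ^ (2 * s) * ‖VectorFourier.fourierIntegral Real.fourierChar volume (innerₗ (EuclideanSpace ℝ (Fin n))) f ξ‖ ^ 2) ^ ((1 : ℝ) / 2)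

end

/-! On the Fourier side, `S0 n τ` multiplies by the symbol of `H_κ`, whose modulus is at most
`‖H_κ‖_{L¹} = 1`, and dilates by `R = e^{-τ/2}`: `|𝓕(S0 f)(ξ)| ≤ R^{1-n} |𝓕f(R⁻¹ξ)|`.
Substituting `η = R⁻¹ξ` in the `Ḣ^s` integral contributes `R^{s+n/2}`, and
`R^{1-n} R^{s+n/2} = e^{(n/2-1-s)τ/2}`. -/

open FourierTransform Convolution
open scoped RealInnerProductSpace

section Fourier

variable {V E : Type*} [NormedAddCommGroup V] [InnerProductSpace ℝ V] [FiniteDimensional ℝ V]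
  [MeasurableSpace V] [BorelSpace V] [NormedAddCommGroup E] [NormedSpace ℂ E]

theorem Real.fourier_comp_smul {R : ℝ} (hR : 0 < R) (f : V → E) (ξ : V) :
    𝓕 (fun x => f (R • x)) ξ = (R ^ Module.finrank ℝ V)⁻¹ • 𝓕 f (R⁻¹ • ξ) := by
  simp only [Real.fourier_eq]
  rw [← Measure.integral_comp_smul_of_nonneg volume (fun x => 𝐞 (-⟪x, R⁻¹ • ξ⟫) • f x) R
    (hR := hR.le)]
  simp only [real_inner_smul_left, real_inner_smul_right, inv_mul_cancel_left₀ hR.ne']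

theorem Real.fourier_const_smul (c : ℂ) (f : V → E) (ξ : V) :
    𝓕 (fun x => c • f x) ξ = c • 𝓕 f ξ :=
  congrFun (VectorFourier.fourierIntegral_const_smul _ _ _ f c) ξ

end Fourier

section HeatKernel

variable {n : ℕ} {t : ℝ}

theorem heatK_nonneg (ht : 0 ≤ t) (x : EuclideanSpace ℝ (Fin n)) : 0 ≤ heatK n t x := by
  unfold heatK; positivity

theorem integral_heatK (ht : 0 < t) : ∫ x, heatK n t x = 1 := by
  have hexp : ∀ x : EuclideanSpace ℝ (Fin n),
      Real.exp (-‖x‖ ^ 2 / (4 * t)) = Real.exp (-(4 * t)⁻¹ * ‖x‖ ^ 2) := fun x => by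
    ring_nf
  simp only [heatK, hexp, integral_const_mul]
  rw [GaussianFourier.integral_rexp_neg_mul_sq_norm (by positivity), finrank_euclideanSpace,
    Fintype.card_fin, div_inv_eq_mul, ← mul_assoc, mul_comm Real.pi 4, neg_div,
    Real.rpow_neg (by positivity), inv_mul_cancel₀ (by positivity)]

theorem integrable_heatK (ht : 0 < t) : Integrable (heatK n t) :=
  Integrable.of_integral_ne_zero (by rw [integral_heatK ht]; exact one_ne_zero)

theorem norm_fourier_heatK_le_one (ht : 0 < t) (ξ : EuclideanSpace ℝ (Fin n)) :
    ‖𝓕 (fun x => (heatK n t x : ℂ)) ξ‖ ≤ 1 := by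
  calc ‖𝓕 (fun x => (heatK n t x : ℂ)) ξ‖ ≤ ∫ x, ‖(heatK n t x : ℂ)‖ :=
        VectorFourier.norm_fourierIntegral_le_integral_norm _ _ _ _ _
    _ = 1 := by
        simp only [Complex.norm_real, Real.norm_of_nonneg (heatK_nonneg ht.le _), integral_heatK ht]

end HeatKernel

section FreeSemigroup

variable {n : ℕ}

theorem S0_eq_smul_convolution (τ : ℝ) (f : EuclideanSpace ℝ (Fin n) → ℂ) :
    S0 n τ f = fun x => (Real.exp (-τ / 2) : ℂ) •
      (f ⋆[ContinuousLinearMap.mul ℂ ℂ] fun y => (heatK n (1 - Real.exp (-τ)) y : ℂ))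
        (Real.exp (-τ / 2) • x) := by
  ext x
  simp only [S0, convolution_def, ContinuousLinearMap.mul_apply', smul_eq_mul, mul_comm (f _)]

theorem norm_fourier_S0_le {τ : ℝ} (hτ : 0 < τ) {f : EuclideanSpace ℝ (Fin n) → ℂ}
    (hf : Integrable f) (ξ : EuclideanSpace ℝ (Fin n)) :
    ‖𝓕 (S0 n τ f) ξ‖ ≤
      Real.exp (-τ / 2) * (Real.exp (-τ / 2) ^ n)⁻¹ * ‖𝓕 f ((Real.exp (-τ / 2))⁻¹ • ξ)‖ := by
  have hκ : 0 < 1 - Real.exp (-τ) := sub_pos.2 (Real.exp_lt_one_iff.2 (by linarith))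
  have hH : Integrable fun y => (heatK n (1 - Real.exp (-τ)) y : ℂ) :=
    (integrable_heatK hκ).ofReal
  rw [S0_eq_smul_convolution, Real.fourier_const_smul, Real.fourier_comp_smul (Real.exp_pos _),
    Real.fourier_mul_convolution_eq hf hH, finrank_euclideanSpace,
    Fintype.card_fin, norm_smul, norm_smul, norm_mul, Complex.norm_real, Real.norm_eq_abs,
    Real.norm_eq_abs, abs_of_pos (Real.exp_pos _), abs_of_pos (by positivity), ← mul_assoc]
  gcongr
  exact mul_le_of_le_one_right (norm_nonneg _) (norm_fourier_heatK_le_one hκ _)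

end FreeSemigroup

theorem Real.rpow_le_one_add_pow_ceil {x r : ℝ} (hx : 0 ≤ x) (hr : 0 ≤ r) :
    x ^ r ≤ 1 + x ^ ⌈r⌉₊ := by
  rcases le_or_gt x 1 with hx1 | hx1
  · linarith [Real.rpow_le_one hx hx1 hr, pow_nonneg hx ⌈r⌉₊]
  · have := Real.rpow_le_rpow_of_exponent_le hx1.le (Nat.le_ceil r)
    rw [Real.rpow_natCast] at this
    linarith

theorem SchwartzMap.integrable_norm_rpow_mul_norm_sq {V E : Type*} [NormedAddCommGroup V]
    [NormedSpace ℝ V] [SecondCountableTopology V] [MeasurableSpace V] [BorelSpace V]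
    [NormedAddCommGroup E] [NormedSpace ℝ E] (μ : Measure V) [μ.HasTemperateGrowth] {r : ℝ}
    (hr : 0 ≤ r) (g : SchwartzMap V E) :
    Integrable (fun x : V => ‖x‖ ^ r * ‖g x‖ ^ 2) μ := by
  set C := SchwartzMap.seminorm ℝ 0 0 g
  refine ((g.integrable.norm.add (g.integrable_pow_mul μ ⌈r⌉₊)).const_mul C).mono'
    (by fun_prop) (Filter.Eventually.of_forall fun x => ?_)
  have hgC : ‖g x‖ ^ 2 ≤ C * ‖g x‖ := by
    rw [sq]; exact mul_le_mul_of_nonneg_right (g.norm_le_seminorm ℝ x) (norm_nonneg _)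
  rw [Real.norm_of_nonneg (by positivity)]
  calc ‖x‖ ^ r * ‖g x‖ ^ 2 ≤ (1 + ‖x‖ ^ ⌈r⌉₊) * (C * ‖g x‖) :=
        mul_le_mul (Real.rpow_le_one_add_pow_ceil (norm_nonneg x) hr) hgC (by positivity)
          (by positivity)
    _ = C * (‖g x‖ + ‖x‖ ^ ⌈r⌉₊ * ‖g x‖) := by ring

theorem hnorm_le_of_norm_fourier_le {n : ℕ} {s C R : ℝ} (hC : 0 ≤ C) (hR : 0 < R)
    {f g : EuclideanSpace ℝ (Fin n) → ℂ}
    (hf : Integrable fun η => ‖η‖ ^ (2 * s) * ‖𝓕 f η‖ ^ 2)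
    (hgf : ∀ ξ, ‖𝓕 g ξ‖ ≤ C * ‖𝓕 f (R⁻¹ • ξ)‖) :
    hnorm n s g ≤ C * R ^ (s + n / 2) * hnorm n s f := by
  set w := fun η : EuclideanSpace ℝ (Fin n) => ‖η‖ ^ (2 * s) * ‖𝓕 f η‖ ^ 2
  have hpt : ∀ ξ, ‖ξ‖ ^ (2 * s) * ‖𝓕 g ξ‖ ^ 2 ≤ C ^ 2 * R ^ (2 * s) * w (R⁻¹ • ξ) := by
    intro ξ
    have hξ : ‖ξ‖ ^ (2 * s) = R ^ (2 * s) * ‖R⁻¹ • ξ‖ ^ (2 * s) := by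
      rw [norm_smul, Real.norm_of_nonneg (inv_nonneg.2 hR.le), Real.mul_rpow (by positivity)
        (norm_nonneg _), Real.inv_rpow hR.le, mul_inv_cancel_left₀ (by positivity)]
    calc ‖ξ‖ ^ (2 * s) * ‖𝓕 g ξ‖ ^ 2 ≤ ‖ξ‖ ^ (2 * s) * (C * ‖𝓕 f (R⁻¹ • ξ)‖) ^ 2 := by
          gcongr; exact hgf ξ
      _ = C ^ 2 * R ^ (2 * s) * w (R⁻¹ • ξ) := by rw [hξ]; ring
  have hR2 : (R ^ (s + n / 2)) ^ 2 = R ^ (2 * s) * R ^ n := by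
    rw [← Real.rpow_natCast (R ^ _), ← Real.rpow_mul hR.le, ← Real.rpow_natCast R n,
      ← Real.rpow_add hR]
    congr 1; push_cast; ring
  have hint : ∫ ξ, ‖ξ‖ ^ (2 * s) * ‖𝓕 g ξ‖ ^ 2 ≤ (C * R ^ (s + n / 2)) ^ 2 * ∫ η, w η :=
    calc ∫ ξ, ‖ξ‖ ^ (2 * s) * ‖𝓕 g ξ‖ ^ 2 ≤ ∫ ξ, C ^ 2 * R ^ (2 * s) * w (R⁻¹ • ξ) :=
          integral_mono_of_nonneg (Filter.Eventually.of_forall fun ξ => by positivity)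
            ((hf.comp_smul (inv_ne_zero hR.ne')).const_mul _) (Filter.Eventually.of_forall hpt)
      _ = (C * R ^ (s + n / 2)) ^ 2 * ∫ η, w η := by
          rw [integral_const_mul, Measure.integral_comp_inv_smul_of_nonneg volume w hR.le,
            finrank_euclideanSpace, Fintype.card_fin, smul_eq_mul, mul_pow, hR2]
          ring
  have hw : 0 ≤ ∫ η, w η := integral_nonneg fun η => by positivity
  simp only [hnorm, ← Real.sqrt_eq_rpow]
  calc √(∫ ξ, ‖ξ‖ ^ (2 * s) * ‖𝓕 g ξ‖ ^ 2) ≤ √((C * R ^ (s + n / 2)) ^ 2 * ∫ η, w η) :=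
        Real.sqrt_le_sqrt hint
    _ = C * R ^ (s + n / 2) * √(∫ η, w η) := by
        rw [Real.sqrt_mul (by positivity), Real.sqrt_sq (by positivity)]

theorem S0_growth_bound_general (n : ℕ) (τ : ℝ) (hτ : 0 < τ) (s : ℝ) (hs : 0 ≤ s)
    (f : SchwartzMap (EuclideanSpace ℝ (Fin n)) ℂ) :
    hnorm n s (S0 n τ f) ≤
      Real.exp ((1 / 2) * ((n : ℝ) / 2 - 1 - s) * τ) * hnorm n s f := by
  have hfourier :=
    SchwartzMap.integrable_norm_rpow_mul_norm_sq volume (by positivity : 0 ≤ 2 * s) (𝓕 f)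
  refine (hnorm_le_of_norm_fourier_le (by positivity) (Real.exp_pos _) hfourier
    (norm_fourier_S0_le hτ f.integrable)).trans_eq ?_
  rw [← Real.exp_nat_mul, ← Real.exp_neg, ← Real.exp_mul, ← Real.exp_add, ← Real.exp_add]
  congr 2
  ring

/-- Growth bound of the free semigroup on Ḣ^s. -/
theorem S0_growth_bound (n : ℕ) (hn : 1 ≤ n) (τ : ℝ) (hτ : 0 < τ) (s : ℝ) (hs : 0 ≤ s)
    (f : SchwartzMap (EuclideanSpace ℝ (Fin n)) ℂ) :
    hnorm n s (S0 n τ f) ≤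
      Real.exp ((1 / 2) * ((n : ℝ) / 2 - 1 - s) * τ) * hnorm n s f :=
  S0_growth_bound_general n τ hτ s hs f
end

section
/- Let b > 0, n ≥ 6, and φ(ρ) = a(ρ² + b)^{−1/2} for some a > 0. The function ϱ(ρ) = (ρ² + b)^{−3/2} satisfies the eigenvalue equation Lϱ(|x|) = ϱ(|x|) for the linearized operator, i.e., Δ_x ϱ(|x|) − (1/2) x·∇_x ϱ(|x|) − (1/2)ϱ(|x|) + V(x)ϱ(|x|) = ϱ(|x|) on ℝⁿ ∖ {0}, where V(x) = 3(n−3)(2αφ(|x|)² − 5β|x|²φ(|x|)⁴), provided a, b, α, β are related by a = 1+γ, b = 2γ(2+γ)((n−3)(1+γ)² − 3)/(1+γ)², α = 3/(2(n−3)(1+γ)⁴) + 1/2, β = 1/((n−3)(1+γ)⁴), with 0 < γ < √2 − 1. -/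
noncomputable section

/-- The Laplacian of a real-valued function on ℝⁿ, in coordinates. -/
def lapR (n : ℕ) (F : EuclideanSpace ℝ (Fin n) → ℝ) (x : EuclideanSpace ℝ (Fin n)) : ℝ :=
  ∑ i : Fin n, fderiv ℝ (fun y => fderiv ℝ F y (EuclideanSpace.single i 1)) x
    (EuclideanSpace.single i 1)

end

/-!
Since `ϱ(|x|) = g(|x|²)` with `g(s) = (s + b)^(-3/2)`, the chain rule gives `x·∇ϱ = 2 s g'(s)` and
`Δϱ = 2n g'(s) + 4 s g''(s)` at `s = |x|²`. With `φ² = a²/(s + b)` the whole equation becomes a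
rational identity in `s`, which holds because the parameters satisfy `(n - 3) β a⁴ = 1` and
`2 (n - 3) α a² = n + b/2`; the second relation is the definition of `b` in terms of `γ`.
-/

section Radial

variable {E : Type*} [NormedAddCommGroup E] [InnerProductSpace ℝ E] {g g' : ℝ → ℝ} {x : E}

theorem hasFDerivAt_comp_norm_sq {d : ℝ} (hg : HasDerivAt g d (‖x‖ ^ 2)) :
    HasFDerivAt (fun y : E => g (‖y‖ ^ 2)) ((2 * d) • innerSL ℝ x) x :=
  (hg.comp_hasFDerivAt x (hasStrictFDerivAt_norm_sq x).hasFDerivAt).congr_fderiv <| by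
    ext v
    simp
    ring

theorem fderiv_comp_norm_sq_apply_self {d : ℝ} (hg : HasDerivAt g d (‖x‖ ^ 2)) :
    fderiv ℝ (fun y : E => g (‖y‖ ^ 2)) x x = 2 * d * ‖x‖ ^ 2 := by
  simp [(hasFDerivAt_comp_norm_sq hg).fderiv, mul_assoc]

theorem fderiv_fderiv_comp_norm_sq_apply {g'' : ℝ} (hg : ∀ s, 0 ≤ s → HasDerivAt g (g' s) s)
    (hg' : HasDerivAt g' g'' (‖x‖ ^ 2)) (v : E) :
    fderiv ℝ (fun y => fderiv ℝ (fun y : E => g (‖y‖ ^ 2)) y v) x v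
      = 2 * g' (‖x‖ ^ 2) * ‖v‖ ^ 2 + 4 * g'' * inner ℝ x v ^ 2 := by
  have hdir : (fun y => fderiv ℝ (fun y : E => g (‖y‖ ^ 2)) y v)
      = fun y => 2 * g' (‖y‖ ^ 2) * innerSL ℝ v y := by
    funext y
    rw [(hasFDerivAt_comp_norm_sq (hg _ (sq_nonneg _))).fderiv]
    simp [real_inner_comm]
  have h : HasFDerivAt (fun y => 2 * g' (‖y‖ ^ 2) * innerSL ℝ v y) _ x :=
    ((hasFDerivAt_comp_norm_sq hg').const_mul 2).mul (innerSL ℝ v).hasFDerivAt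
  rw [hdir, h.fderiv]
  simp [real_inner_comm x v]
  ring

end Radial

theorem lapR_comp_norm_sq {n : ℕ} {g g' : ℝ → ℝ} {g'' : ℝ} {x : EuclideanSpace ℝ (Fin n)}
    (hg : ∀ s, 0 ≤ s → HasDerivAt g (g' s) s) (hg' : HasDerivAt g' g'' (‖x‖ ^ 2)) :
    lapR n (fun y => g (‖y‖ ^ 2)) x = 2 * n * g' (‖x‖ ^ 2) + 4 * ‖x‖ ^ 2 * g'' := by
  simp only [lapR, fderiv_fderiv_comp_norm_sq_apply hg hg', PiLp.norm_single,
    norm_one, EuclideanSpace.inner_single_right, conj_trivial, one_mul, Finset.sum_add_distrib,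
    ← Finset.mul_sum, ← EuclideanSpace.real_norm_sq_eq, Finset.sum_const, Finset.card_univ,
    Fintype.card_fin, nsmul_eq_mul]
  ring

theorem hasDerivAt_add_const_rpow {b p s : ℝ} (hs : s + b ≠ 0) :
    HasDerivAt (fun t => (t + b) ^ p) (p * (s + b) ^ (p - 1)) s := by
  simpa using ((hasDerivAt_id s).add_const b).rpow_const (p := p) (Or.inl hs)

/-- The eigen-equation in the variable `s = ρ²` for `g(s) = (s + b)^(-3/2)`, namely
`4 s g'' + (2n - s) g' - (3/2) g + V g = 0`; the two parameter relations make the coefficients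
of `s g / (s + b)²` and `g / (s + b)` cancel. -/
theorem radial_eigen_equation {n s a b α β c : ℝ} (hu : 0 < s + b) (hc : c ^ 2 = a ^ 2 / (s + b))
    (hβ : (n - 3) * β * a ^ 4 = 1) (hα : 2 * (n - 3) * α * a ^ 2 = n + b / 2) :
    2 * n * (-(3:ℝ)/2 * (s + b) ^ (-(3:ℝ)/2 - 1))
      + 4 * s * (-(3:ℝ)/2 * ((-(3:ℝ)/2 - 1) * (s + b) ^ (-(3:ℝ)/2 - 1 - 1)))
      - 1/2 * (2 * (-(3:ℝ)/2 * (s + b) ^ (-(3:ℝ)/2 - 1)) * s) - 1/2 * (s + b) ^ (-(3:ℝ)/2)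
      + 3 * (n - 3) * (2 * α * c ^ 2 - 5 * β * s * c ^ 4) * (s + b) ^ (-(3:ℝ)/2)
      = (s + b) ^ (-(3:ℝ)/2) := by
  have hc4 : c ^ 4 = a ^ 4 / (s + b) ^ 2 := by
    rw [show c ^ 4 = (c ^ 2) ^ 2 by ring, hc, div_pow, ← pow_mul]
  have hsub₁ := Real.rpow_sub_one hu.ne' (-(3:ℝ)/2)
  have hsub₂ := Real.rpow_sub_one hu.ne' (-(3:ℝ)/2 - 1)
  rw [hsub₂, hsub₁, hc4, hc]
  set R := (s + b) ^ (-(3:ℝ)/2)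
  field_simp
  linear_combination (12 * R * (s + b)) * hα - (60 * R * s) * hβ

theorem shrinker_b_pos {m γ : ℝ} (hm : 6 ≤ m) (hγ : 0 < γ) :
    0 < 2 * γ * (2 + γ) * ((m - 3) * (1 + γ) ^ 2 - 3) / (1 + γ) ^ 2 := by
  have : 0 < (m - 3) * (1 + γ) ^ 2 - 3 := by nlinarith
  positivity

theorem shrinker_β_relation {m γ : ℝ} (hm : m ≠ 3) (hγ : 1 + γ ≠ 0) :
    (m - 3) * (1 / ((m - 3) * (1 + γ) ^ 4)) * (1 + γ) ^ 4 = 1 := by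
  have : m - 3 ≠ 0 := sub_ne_zero.mpr hm
  field_simp

theorem shrinker_α_relation {m γ : ℝ} (hm : m ≠ 3) (hγ : 1 + γ ≠ 0) :
    2 * (m - 3) * (3 / (2 * (m - 3) * (1 + γ) ^ 4) + 1 / 2) * (1 + γ) ^ 2
      = m + 2 * γ * (2 + γ) * ((m - 3) * (1 + γ) ^ 2 - 3) / (1 + γ) ^ 2 / 2 := by
  have : m - 3 ≠ 0 := sub_ne_zero.mpr hm
  field_simp
  ring

theorem eigenvalue_one_eigenfunction_general
    (n : ℕ) (hn : 6 ≤ n) (γ : ℝ) (hγ0 : 0 < γ)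
    (a b α β : ℝ)
    (ha : a = 1 + γ)
    (hb : b = 2 * γ * (2 + γ) * (((n : ℝ) - 3) * (1 + γ) ^ 2 - 3) / (1 + γ) ^ 2)
    (hα : α = 3 / (2 * ((n : ℝ) - 3) * (1 + γ) ^ 4) + 1 / 2)
    (hβ : β = 1 / (((n : ℝ) - 3) * (1 + γ) ^ 4))
    (φ : ℝ → ℝ) (hφ : ∀ ρ, φ ρ = a / Real.sqrt (ρ ^ 2 + b))
    (V : EuclideanSpace ℝ (Fin n) → ℝ)
    (hV : ∀ x, V x = 3 * ((n : ℝ) - 3) *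
      (2 * α * (φ ‖x‖) ^ 2 - 5 * β * ‖x‖ ^ 2 * (φ ‖x‖) ^ 4))
    (F : EuclideanSpace ℝ (Fin n) → ℝ)
    (hF : ∀ x, F x = (‖x‖ ^ 2 + b) ^ (-(3 : ℝ) / 2)) :
    ∀ x : EuclideanSpace ℝ (Fin n), x ≠ 0 →
      lapR n F x - (1 / 2) * fderiv ℝ F x x - (1 / 2) * F x + V x * F x = F x := by
  intro x _
  have hn6 : (6 : ℝ) ≤ n := by exact_mod_cast hn
  have hn3 : (n : ℝ) ≠ 3 := by linarith
  have hγ : 1 + γ ≠ 0 := by linarith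
  have hb0 : 0 < b := hb ▸ shrinker_b_pos hn6 hγ0
  have hu : 0 < ‖x‖ ^ 2 + b := by positivity
  have hφx : φ ‖x‖ ^ 2 = a ^ 2 / (‖x‖ ^ 2 + b) := by rw [hφ, div_pow, Real.sq_sqrt hu.le]
  have hg : ∀ s, 0 ≤ s → HasDerivAt (fun t => (t + b) ^ (-(3:ℝ)/2))
      (-(3:ℝ)/2 * (s + b) ^ (-(3:ℝ)/2 - 1)) s :=
    fun s hs => hasDerivAt_add_const_rpow (by positivity)
  obtain rfl : F = fun y => (‖y‖ ^ 2 + b) ^ (-(3:ℝ)/2) := funext hF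
  rw [lapR_comp_norm_sq hg ((hasDerivAt_add_const_rpow hu.ne').const_mul _),
    fderiv_comp_norm_sq_apply_self (hg _ (sq_nonneg _)), hV]
  subst ha hα hβ hb
  linear_combination radial_eigen_equation hu hφx (shrinker_β_relation hn3 hγ)
    (shrinker_α_relation hn3 hγ)

/-- ϱ(|x|) = (|x|²+b)^{−3/2} is an eigenfunction with eigenvalue 1 of the linearized
operator L = Δ − (1/2)x·∇ − 1/2 + V around the shrinker profile φ. -/
theorem eigenvalue_one_eigenfunction
    (n : ℕ) (hn : 6 ≤ n) (γ : ℝ) (hγ0 : 0 < γ) (hγ1 : γ < Real.sqrt 2 - 1)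
    (a b α β : ℝ)
    (ha : a = 1 + γ)
    (hb : b = 2 * γ * (2 + γ) * (((n : ℝ) - 3) * (1 + γ) ^ 2 - 3) / (1 + γ) ^ 2)
    (hα : α = 3 / (2 * ((n : ℝ) - 3) * (1 + γ) ^ 4) + 1 / 2)
    (hβ : β = 1 / (((n : ℝ) - 3) * (1 + γ) ^ 4))
    (φ : ℝ → ℝ) (hφ : ∀ ρ, φ ρ = a / Real.sqrt (ρ ^ 2 + b))
    (V : EuclideanSpace ℝ (Fin n) → ℝ)
    (hV : ∀ x, V x = 3 * ((n : ℝ) - 3) *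
      (2 * α * (φ ‖x‖) ^ 2 - 5 * β * ‖x‖ ^ 2 * (φ ‖x‖) ^ 4))
    (F : EuclideanSpace ℝ (Fin n) → ℝ)
    (hF : ∀ x, F x = (‖x‖ ^ 2 + b) ^ (-(3 : ℝ) / 2)) :
    ∀ x : EuclideanSpace ℝ (Fin n), x ≠ 0 →
      lapR n F x - (1 / 2) * fderiv ℝ F x x - (1 / 2) * F x + V x * F x = F x :=
  eigenvalue_one_eigenfunction_general n hn γ hγ0 a b α β ha hb hα hβ φ hφ V hV F hF
end
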